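/- Let f and B be holomorphic functions on the open unit disc 𝔻 with f(0) = 1 and with B(0) a real number in (0,1]. Let c ∈ (−π,π], let σ be a finite nonnegative Borel measure on [−π,π], and let w : [−π,π] → ℝ be Lebesgue integrable. Assume that for all z ∈ 𝔻, f(z) = B(z)·exp(ic − K_σ(z))·exp(K_w(z)), where K_σ(z) = (1/2π)∫_{−π}^{π}(e^{it}+z)/(e^{it}−z) dσ(t) and K_w(z) = (1/2π)∫_{−π}^{π}(e^{it}+z)/(e^{it}−z)·w(t) dt. Then c = 0, and −log B(0) = (1/2π)·(∫_{−π}^{π} w(t) dt − σ([−π,π])) ≥ 0. Moreover, for every integer n ≥ 1 the n-th Taylor coefficient at 0 of the holomorphic function z ↦ K_w(z) − K_σ(z) equals (1/π)·(∫_{−π}^{π} e^{−int} w(t) dt − ∫_{−π}^{π} e^{−int} dσ(t)). -/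

import Mathlib

open MeasureTheory

/-- `K_σ(z) = (1/2π)∫_{-π}^{π} (e^{it}+z)/(e^{it}-z) dσ(t)` for a measure `σ` on `[-π,π]`. -/
noncomputable def Ksigma (σ : Measure ℝ) (z : ℂ) : ℂ :=
  (1 / (2 * Real.pi) : ℂ) * ∫ t in Set.Icc (-Real.pi) Real.pi,
    (Complex.exp (Complex.I * t) + z) / (Complex.exp (Complex.I * t) - z) ∂σ

/-- `K_w(z) = (1/2π)∫_{-π}^{π} (e^{it}+z)/(e^{it}-z)·w(t) dt` for integrable `w`. -/
noncomputable def Kw (w : ℝ → ℝ) (z : ℂ) : ℂ :=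
  (1 / (2 * Real.pi) : ℂ) * ∫ t in Set.Icc (-Real.pi) Real.pi,
    ((Complex.exp (Complex.I * t) + z) / (Complex.exp (Complex.I * t) - z)) * (w t : ℂ)


/-! At `z = 0` the kernel `(e^{it} + z)/(e^{it} - z)` equals `1`, so the factorization at `0`
reads `1 = B(0) e^{ic} e^{K_w(0) - K_σ(0)}` with `B(0) > 0` and `K_w(0) - K_σ(0)` real; comparing
moduli gives the formula for `-log B(0)` (nonnegative since `B(0) ≤ 1`), and comparing arguments
gives `c = 0`, as `c ∈ (-π, π]`. For `|z| < 1` the kernel expands as `1 + 2 ∑_{n ≥ 1} e^{-int} z^n`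
with coefficients bounded uniformly in `t`, so integrating term by term against `w dt` and `dσ`
produces the power series of `K_w - K_σ` on the unit disc, whose coefficients are its Taylor
coefficients. -/

open Complex

theorem hasSum_add_div_sub_of_norm_lt {ζ z : ℂ} (h : ‖z‖ < ‖ζ‖) :
    HasSum (fun n : ℕ => (if n = 0 then 1 else 2 * ζ⁻¹ ^ n) * z ^ n) ((ζ + z) / (ζ - z)) := by
  have hζ : ζ ≠ 0 := norm_pos_iff.1 ((norm_nonneg z).trans_lt h)
  have hq : ‖ζ⁻¹ * z‖ < 1 := by
    rwa [norm_mul, norm_inv, inv_mul_lt_one₀ (norm_pos_iff.2 hζ)]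
  have hsub : ζ - z ≠ 0 := fun h' => by rw [sub_eq_zero.1 h'] at h; exact lt_irrefl _ h
  have hterm : (fun n : ℕ => (if n = 0 then 1 else 2 * ζ⁻¹ ^ n) * z ^ n)
      = fun n => 2 * (ζ⁻¹ * z) ^ n + if n = 0 then -1 else 0 := by
    funext n
    rcases n with _ | n
    · norm_num
    · simp [mul_pow, mul_assoc]
  have hval : (ζ + z) / (ζ - z) = 2 * (1 - ζ⁻¹ * z)⁻¹ + -1 := by
    field_simp
    ring
  rw [hterm, hval]
  exact ((hasSum_geometric_of_norm_lt_one hq).mul_left 2).add (hasSum_ite_eq 0 (-1 : ℂ))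

theorem eq_zero_of_exp_mul_I_eq_one {c : ℝ} (hc : c ∈ Set.Ioc (-Real.pi) Real.pi)
    (h : exp (c * I) = 1) : c = 0 := by
  rw [← arg_cos_add_sin_mul_I hc, ← exp_mul_I, h, arg_one]

theorem ofReal_mul_exp_eq_one_iff {r a c : ℝ} (hr : 0 < r) :
    (r : ℂ) * exp (a + c * I) = 1 ↔ r * Real.exp a = 1 ∧ exp (c * I) = 1 := by
  rw [exp_add, ← ofReal_exp, ← mul_assoc, ← ofReal_mul]
  constructor
  · intro h
    have hmod : r * Real.exp a = 1 := by
      simpa [norm_exp, abs_of_pos hr, abs_of_pos (Real.exp_pos a)] using congrArg norm h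
    rw [hmod, ofReal_one, one_mul] at h
    exact ⟨hmod, h⟩
  · rintro ⟨hmod, hrot⟩
    rw [hmod, hrot, ofReal_one, one_mul]

theorem HasFPowerSeriesAt.iteratedDeriv_div_factorial {𝕜 : Type*} [NontriviallyNormedField 𝕜]
    [CompleteSpace 𝕜] [CharZero 𝕜] {f : 𝕜 → 𝕜} {p : FormalMultilinearSeries 𝕜 𝕜 𝕜} {x : 𝕜}
    (h : HasFPowerSeriesAt f p x) (n : ℕ) :
    iteratedDeriv n f x / n.factorial = p.coeff n := by
  simpa using congr_arg (·.coeff n) (h.analyticAt.hasFPowerSeriesAt.eq_formalMultilinearSeries h)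

noncomputable def herglotzCoeff (n : ℕ) (t : ℝ) : ℂ :=
  if n = 0 then 1 else 2 * exp (-I * n * t)

theorem norm_herglotzCoeff_le (n : ℕ) (t : ℝ) : ‖herglotzCoeff n t‖ ≤ 2 := by
  unfold herglotzCoeff
  split_ifs
  · norm_num
  · simp [norm_exp]

theorem continuous_herglotzCoeff (n : ℕ) : Continuous (herglotzCoeff n) := by
  unfold herglotzCoeff
  split_ifs <;> fun_prop

theorem herglotzCoeff_eq_inv_exp_pow (n : ℕ) (t : ℝ) :
    herglotzCoeff n t = if n = 0 then 1 else 2 * (exp (I * t))⁻¹ ^ n := by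
  rw [herglotzCoeff, ← exp_neg, ← exp_nat_mul]
  ring_nf

theorem herglotzCoeff_of_ne_zero {n : ℕ} (hn : n ≠ 0) :
    herglotzCoeff n = fun t : ℝ => 2 * exp (-I * n * t) := by
  funext t
  simp [herglotzCoeff, hn]

theorem hasSum_herglotzCoeff_mul_pow {z : ℂ} (hz : ‖z‖ < 1) (t : ℝ) :
    HasSum (fun n => herglotzCoeff n t * z ^ n) ((exp (I * t) + z) / (exp (I * t) - z)) := by
  simp_rw [herglotzCoeff_eq_inv_exp_pow]
  exact hasSum_add_div_sub_of_norm_lt (by rwa [norm_exp_I_mul_ofReal])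

section HerglotzIntegral

variable {μ : Measure ℝ} {φ : ℝ → ℂ}

theorem integrable_herglotzCoeff_mul (hφ : Integrable φ μ) (n : ℕ) :
    Integrable (fun t => herglotzCoeff n t * φ t) μ :=
  hφ.bdd_mul (continuous_herglotzCoeff n).aestronglyMeasurable
    (.of_forall (norm_herglotzCoeff_le n))

theorem integral_norm_herglotzCoeff_mul_le (hφ : Integrable φ μ) (n : ℕ) :
    ∫ t, ‖herglotzCoeff n t * φ t‖ ∂μ ≤ 2 * ∫ t, ‖φ t‖ ∂μ := by
  rw [← integral_const_mul]
  refine integral_mono (integrable_herglotzCoeff_mul hφ n).norm (hφ.norm.const_mul 2) fun t => ?_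
  rw [norm_mul]
  exact mul_le_mul_of_nonneg_right (norm_herglotzCoeff_le n t) (norm_nonneg _)

theorem hasSum_integral_herglotzCoeff_mul (hφ : Integrable φ μ) {z : ℂ} (hz : ‖z‖ < 1) :
    HasSum (fun n => (∫ t, herglotzCoeff n t * φ t ∂μ) * z ^ n)
      (∫ t, (exp (I * t) + z) / (exp (I * t) - z) * φ t ∂μ) := by
  have hsummable : Summable fun n => ∫ t, ‖herglotzCoeff n t * φ t * z ^ n‖ ∂μ := by
    refine .of_nonneg_of_le (fun n => integral_nonneg fun t => norm_nonneg _) (fun n => ?_)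
      ((summable_geometric_of_lt_one (norm_nonneg z) hz).mul_left (2 * ∫ t, ‖φ t‖ ∂μ))
    simp_rw [norm_mul _ (z ^ n), integral_mul_const, norm_pow]
    exact mul_le_mul_of_nonneg_right (integral_norm_herglotzCoeff_mul_le hφ n) (by positivity)
  have hpointwise (t : ℝ) : ∑' n, herglotzCoeff n t * φ t * z ^ n
      = (exp (I * t) + z) / (exp (I * t) - z) * φ t := by
    simp_rw [mul_right_comm _ (φ t)]
    exact ((hasSum_herglotzCoeff_mul_pow hz t).mul_right (φ t)).tsum_eq
  simpa only [integral_mul_const, hpointwise] using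
    hasSum_integral_of_summable_integral_norm
      (fun n => (integrable_herglotzCoeff_mul hφ n).mul_const (z ^ n)) hsummable

theorem hasFPowerSeriesOnBall_integral_herglotz (hφ : Integrable φ μ) :
    HasFPowerSeriesOnBall (fun z => ∫ t, (exp (I * t) + z) / (exp (I * t) - z) * φ t ∂μ)
      (FormalMultilinearSeries.ofScalars ℂ fun n => ∫ t, herglotzCoeff n t * φ t ∂μ) 0 1 where
  r_le := by
    refine FormalMultilinearSeries.le_radius_of_bound _ (2 * ∫ t, ‖φ t‖ ∂μ) fun n => ?_
    rw [FormalMultilinearSeries.ofScalars_norm, NNReal.coe_one, one_pow, mul_one]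
    exact (norm_integral_le_integral_norm _).trans (integral_norm_herglotzCoeff_mul_le hφ n)
  r_pos := one_pos
  hasSum {y} hy := by
    simpa [FormalMultilinearSeries.ofScalars_apply_eq, mul_comm] using
      hasSum_integral_herglotzCoeff_mul hφ (by simpa [enorm_eq_nnnorm, ← coe_nnnorm] using hy)

end HerglotzIntegral

theorem Kw_zero (w : ℝ → ℝ) :
    Kw w 0 = ((1 / (2 * Real.pi) * ∫ t in Set.Icc (-Real.pi) Real.pi, w t : ℝ) : ℂ) := by
  simp [Kw, integral_complex_ofReal]

theorem Ksigma_zero (σ : Measure ℝ) :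
    Ksigma σ 0 = ((1 / (2 * Real.pi) * (σ (Set.Icc (-Real.pi) Real.pi)).toReal : ℝ) : ℂ) := by
  simp [Ksigma, measureReal_def]

theorem hasFPowerSeriesOnBall_Kw {w : ℝ → ℝ} (hw : IntegrableOn w (Set.Icc (-Real.pi) Real.pi)) :
    HasFPowerSeriesOnBall (Kw w) ((1 / (2 * Real.pi) : ℂ) • FormalMultilinearSeries.ofScalars ℂ
      fun n => ∫ t in Set.Icc (-Real.pi) Real.pi, herglotzCoeff n t * (w t : ℂ)) 0 1 :=
  (hasFPowerSeriesOnBall_integral_herglotz hw.ofReal).const_smul (c := (1 / (2 * Real.pi) : ℂ))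

theorem hasFPowerSeriesOnBall_Ksigma (σ : Measure ℝ) [IsFiniteMeasure σ] :
    HasFPowerSeriesOnBall (Ksigma σ) ((1 / (2 * Real.pi) : ℂ) • FormalMultilinearSeries.ofScalars ℂ
      fun n => ∫ t in Set.Icc (-Real.pi) Real.pi, herglotzCoeff n t ∂σ) 0 1 := by
  have h := (hasFPowerSeriesOnBall_integral_herglotz (μ := σ.restrict (Set.Icc (-Real.pi) Real.pi))
    (integrable_const 1)).const_smul (c := (1 / (2 * Real.pi) : ℂ))
  simp only [mul_one] at h
  exact h

theorem statement13_general (f B : ℂ → ℂ)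
    (hf0 : f 0 = 1)
    (hB0re : (B 0).im = 0) (hB0pos : 0 < (B 0).re) (hB0le : (B 0).re ≤ 1)
    (c : ℝ) (hc : c ∈ Set.Ioc (-Real.pi) Real.pi)
    (σ : Measure ℝ) [IsFiniteMeasure σ]
    (w : ℝ → ℝ) (hw : IntegrableOn w (Set.Icc (-Real.pi) Real.pi))
    (hfact : ∀ z ∈ Metric.ball (0 : ℂ) 1,
      f z = B z * Complex.exp (Complex.I * c - Ksigma σ z) * Complex.exp (Kw w z)) :
    c = 0 ∧
    -Real.log ((B 0).re)
      = (1 / (2 * Real.pi)) * ((∫ t in Set.Icc (-Real.pi) Real.pi, w t)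
          - (σ (Set.Icc (-Real.pi) Real.pi)).toReal) ∧
    0 ≤ (1 / (2 * Real.pi)) * ((∫ t in Set.Icc (-Real.pi) Real.pi, w t)
          - (σ (Set.Icc (-Real.pi) Real.pi)).toReal) ∧
    ∀ n : ℕ, 1 ≤ n →
      iteratedDeriv n (fun z => Kw w z - Ksigma σ z) 0 / (n.factorial : ℂ)
        = (1 / Real.pi : ℂ) *
            ((∫ t in Set.Icc (-Real.pi) Real.pi, Complex.exp (-Complex.I * n * t) * (w t : ℂ))
              - ∫ t in Set.Icc (-Real.pi) Real.pi, Complex.exp (-Complex.I * n * t) ∂σ) := by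
  set S := Set.Icc (-Real.pi) Real.pi
  set x := 1 / (2 * Real.pi) * ((∫ t in S, w t) - (σ S).toReal)
  have hB0 : B 0 = ((B 0).re : ℂ) := ext rfl (by simpa using hB0re)
  obtain ⟨hmod, hrot⟩ : (B 0).re * Real.exp x = 1 ∧ exp (c * I) = 1 := by
    rw [← ofReal_mul_exp_eq_one_iff hB0pos]
    have h0 := hfact 0 (Metric.mem_ball_self one_pos)
    rw [hf0, Kw_zero, Ksigma_zero, hB0, mul_assoc, ← exp_add] at h0
    rw [h0]
    congr 2
    simp only [x]
    push_cast
    ring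
  have hlog : -Real.log (B 0).re = x := by
    rw [eq_inv_of_mul_eq_one_left hmod, Real.log_inv, Real.log_exp, neg_neg]
  refine ⟨eq_zero_of_exp_mul_I_eq_one hc hrot, hlog,
    hlog ▸ neg_nonneg.2 (Real.log_nonpos hB0pos.le hB0le), fun n hn => ?_⟩
  have hcoeff := (((hasFPowerSeriesOnBall_Kw hw).sub (hasFPowerSeriesOnBall_Ksigma σ)
    ).hasFPowerSeriesAt).iteratedDeriv_div_factorial n
  have hcoeff_smul_sub (a : ℂ) (P Q : FormalMultilinearSeries ℂ ℂ ℂ) :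
      (a • P - a • Q).coeff n = a * P.coeff n - a * Q.coeff n := rfl
  refine hcoeff.trans ?_
  simp only [hcoeff_smul_sub, FormalMultilinearSeries.coeff_ofScalars,
    herglotzCoeff_of_ne_zero (Nat.one_le_iff_ne_zero.1 hn), mul_assoc, integral_const_mul]
  ring

/-- If `f = B·exp(ic - K_σ)·exp(K_w)` on `𝔻` with `f(0) = 1`, `B(0)` a real
number in `(0,1]`, `c ∈ (-π,π]`, `σ ≥ 0` finite and `w` integrable, then `c = 0`,
`-log B(0) = (1/2π)(∫w - σ([-π,π])) ≥ 0`, and for `n ≥ 1` the `n`-th Taylor coefficient of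
`K_w - K_σ` at `0` is `(1/π)(∫e^{-int}w(t)dt - ∫e^{-int}dσ(t))`. -/
theorem statement13 (f B : ℂ → ℂ)
    (hf : DifferentiableOn ℂ f (Metric.ball (0 : ℂ) 1))
    (hB : DifferentiableOn ℂ B (Metric.ball (0 : ℂ) 1))
    (hf0 : f 0 = 1)
    (hB0re : (B 0).im = 0) (hB0pos : 0 < (B 0).re) (hB0le : (B 0).re ≤ 1)
    (c : ℝ) (hc : c ∈ Set.Ioc (-Real.pi) Real.pi)
    (σ : Measure ℝ) [IsFiniteMeasure σ]
    (w : ℝ → ℝ) (hw : IntegrableOn w (Set.Icc (-Real.pi) Real.pi))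
    (hfact : ∀ z ∈ Metric.ball (0 : ℂ) 1,
      f z = B z * Complex.exp (Complex.I * c - Ksigma σ z) * Complex.exp (Kw w z)) :
    c = 0 ∧
    -Real.log ((B 0).re)
      = (1 / (2 * Real.pi)) * ((∫ t in Set.Icc (-Real.pi) Real.pi, w t)
          - (σ (Set.Icc (-Real.pi) Real.pi)).toReal) ∧
    0 ≤ (1 / (2 * Real.pi)) * ((∫ t in Set.Icc (-Real.pi) Real.pi, w t)
          - (σ (Set.Icc (-Real.pi) Real.pi)).toReal) ∧
    ∀ n : ℕ, 1 ≤ n →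
      iteratedDeriv n (fun z => Kw w z - Ksigma σ z) 0 / (n.factorial : ℂ)
        = (1 / Real.pi : ℂ) *
            ((∫ t in Set.Icc (-Real.pi) Real.pi, Complex.exp (-Complex.I * n * t) * (w t : ℂ))
              - ∫ t in Set.Icc (-Real.pi) Real.pi, Complex.exp (-Complex.I * n * t) ∂σ) :=
  statement13_general f B hf0 hB0re hB0pos hB0le c hc σ w hw hfact
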